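/- arXiv:1910.11564 — 2 statements merged into one kernel-verified Lean document; each statement's English description precedes it below -/
import Mathlib

section
/- For a string S of length n, a character σ, and an index k with S[k] = σ, the number of 3-sub-cadences (i,d,3) with character σ whose middle element is at position k (i.e., i + d = k and S[i] = S[i+d] = S[i+2d] = σ with d ≥ 1 and i ≥ 1 and i + 2d ≤ n) equals (c_{2k} - 1)/2, where c_m := #{(i,j) : 1 ≤ i,j ≤ n, i + j = m, S[i] = σ and S[j] = σ}. -/
open Finset in
/-- the number of 3-sub-cadences with character σ whose middle
element is at position k equals (c_{2k} - 1)/2. -/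
theorem stmt_1 {Alph : Type*} [DecidableEq Alph] (n : ℕ) (S : ℕ → Alph) (σ : Alph)
    (k : ℕ) (hk1 : 1 ≤ k) (hkn : k ≤ n) (hSk : S k = σ)
    (c : ℕ → ℕ)
    (hc : ∀ m, c m = (((Icc 1 n) ×ˢ (Icc 1 n)).filter
      (fun q => q.1 + q.2 = m ∧ S q.1 = σ ∧ S q.2 = σ)).card) :
    (((Icc 1 n) ×ˢ (Icc 1 n)).filter
      (fun q => q.1 + q.2 = k ∧ q.1 + 2 * q.2 ≤ n ∧
        S q.1 = σ ∧ S (q.1 + q.2) = σ ∧ S (q.1 + 2 * q.2) = σ)).card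
      = (c (2 * k) - 1) / 2 := by
  classical
  rw [hc]
  set P : Finset (ℕ × ℕ) := (Icc 1 n) ×ˢ (Icc 1 n) with hP
  set B := P.filter (fun q => q.1 + q.2 = k ∧ q.1 + 2 * q.2 ≤ n ∧
        S q.1 = σ ∧ S (q.1 + q.2) = σ ∧ S (q.1 + 2 * q.2) = σ) with hB
  set A := P.filter (fun q => q.1 + q.2 = 2 * k ∧ S q.1 = σ ∧ S q.2 = σ) with hA
  have key : A.card = 2 * B.card + 1 := by
    have h1 : A.card = (A.filter (fun q => q.1 < q.2)).card
        + (A.filter (fun q => ¬ q.1 < q.2)).card :=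
      (Finset.card_filter_add_card_filter_not _).symm
    have h2 : (A.filter (fun q => ¬ q.1 < q.2)).card
        = ((A.filter (fun q => ¬ q.1 < q.2)).filter (fun q => q.2 < q.1)).card
        + ((A.filter (fun q => ¬ q.1 < q.2)).filter (fun q => ¬ q.2 < q.1)).card :=
      (Finset.card_filter_add_card_filter_not _).symm
    have hE : (A.filter (fun q => ¬ q.1 < q.2)).filter (fun q => ¬ q.2 < q.1)
        = {(k, k)} := by
      ext q
      simp only [Finset.mem_filter, Finset.mem_singleton, hA, hP, Finset.mem_product,
        Finset.mem_Icc, not_lt, Prod.ext_iff]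
      constructor
      · rintro ⟨⟨⟨⟨h1, h2⟩, hsum, _, _⟩, hle1⟩, hle2⟩
        omega
      · rintro ⟨h1, h2⟩
        refine ⟨⟨⟨⟨?_, ?_⟩, ?_, ?_, ?_⟩, ?_⟩, ?_⟩ <;> simp_all <;> omega
    have hLR : ((A.filter (fun q => ¬ q.1 < q.2)).filter (fun q => q.2 < q.1)).card
        = (A.filter (fun q => q.1 < q.2)).card := by
      refine Finset.card_bij' (fun q _ => (q.2, q.1)) (fun q _ => (q.2, q.1)) ?_ ?_ ?_ ?_
      · intro q hq
        simp only [Finset.mem_filter, hA, hP, Finset.mem_product] at hq ⊢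
        obtain ⟨⟨⟨⟨ha, hb⟩, hsum, hs1, hs2⟩, _⟩, hlt⟩ := hq
        exact ⟨⟨⟨hb, ha⟩, by omega, hs2, hs1⟩, hlt⟩
      · intro q hq
        simp only [Finset.mem_filter, hA, hP, Finset.mem_product] at hq ⊢
        obtain ⟨⟨⟨ha, hb⟩, hsum, hs1, hs2⟩, hlt⟩ := hq
        exact ⟨⟨⟨⟨hb, ha⟩, by omega, hs2, hs1⟩, by omega⟩, hlt⟩
      · intro q _; rfl
      · intro q _; rfl
    have hLB : (A.filter (fun q => q.1 < q.2)).card = B.card := by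
      refine Finset.card_bij' (fun q _ => (q.1, k - q.1)) (fun q _ => (q.1, q.1 + 2 * q.2)) ?_ ?_ ?_ ?_
      · intro q hq
        simp only [Finset.mem_filter, hA, hB, hP, Finset.mem_product, Finset.mem_Icc] at hq ⊢
        obtain ⟨⟨⟨ha, hb⟩, hsum, hs1, hs2⟩, hlt⟩ := hq
        have h2 : q.2 = q.1 + 2 * (k - q.1) := by omega
        refine ⟨⟨ha, ⟨by omega, by omega⟩⟩, by omega, by omega, hs1, ?_, ?_⟩
        · have : q.1 + (k - q.1) = k := by omega
          rw [this, hSk]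
        · rw [← h2]; exact hs2
      · intro q hq
        simp only [Finset.mem_filter, hA, hB, hP, Finset.mem_product, Finset.mem_Icc] at hq ⊢
        obtain ⟨⟨⟨ha1, ha2⟩, hb1, hb2⟩, hsum, hle, hs1, hs2, hs3⟩ := hq
        exact ⟨⟨⟨⟨ha1, by omega⟩, ⟨by omega, by omega⟩⟩, by omega, hs1, hs3⟩, by omega⟩
      · intro q hq
        simp only [Finset.mem_filter, hA, hP, Finset.mem_product, Finset.mem_Icc] at hq
        obtain ⟨⟨⟨ha, hb⟩, hsum, _⟩, hlt⟩ := hq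
        ext <;> simp <;> omega
      · intro q hq
        simp only [Finset.mem_filter, hB, hP, Finset.mem_product, Finset.mem_Icc] at hq
        obtain ⟨⟨ha, hb⟩, hsum, _⟩ := hq
        ext <;> simp <;> omega
    rw [h1, h2, hE, hLR, hLB]
    simp
    ring
  rw [← hA] at *
  omega
end

section
/- Let P be a triangle in the plane with a horizontal cathetus and a vertical cathetus, with legs spanning [x_l, x_u] × [y_l, y_u] and right angle at (x_l, y_l). Then the set of integer points of P (with catheti included, hypotenuse excluded) is the disjoint union of: the integer points of the sub-triangle with x-coordinate ≥ ⌈(x_l+x_u)/2⌉, the integer points of the sub-triangle with y-coordinate ≥ ⌈(y_l+y_u)/2⌉, and the integer points of the rectangle with x-coordinate ≤ ⌈(x_l+x_u)/2⌉ - 1 and y-coordinate ≤ ⌈(y_l+y_u)/2⌉ - 1. -/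
/-- the integer points of the right-angled triangle P (catheti
included, hypotenuse excluded) are the disjoint union of the integer points of
two sub-triangles and a rectangle. -/
theorem stmt_10 (xl xu yl yu : ℤ) (hx : xl < xu) (hy : yl < yu)
    (P : Set (ℤ × ℤ))
    (hP : P = {q : ℤ × ℤ | xl ≤ q.1 ∧ yl ≤ q.2 ∧
      ((q.1 : ℚ) - xl) / ((xu : ℚ) - xl) + ((q.2 : ℚ) - yl) / ((yu : ℚ) - yl) < 1})
    (cx cy : ℤ) (hcx : cx = ⌈((xl : ℚ) + xu) / 2⌉) (hcy : cy = ⌈((yl : ℚ) + yu) / 2⌉)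
    (T1 T2 Rect : Set (ℤ × ℤ))
    (hT1 : T1 = {q ∈ P | cx ≤ q.1})
    (hT2 : T2 = {q ∈ P | cy ≤ q.2})
    (hRect : Rect = {q ∈ P | q.1 ≤ cx - 1 ∧ q.2 ≤ cy - 1}) :
    P = T1 ∪ T2 ∪ Rect ∧ T1 ∩ T2 = ∅ ∧ T1 ∩ Rect = ∅ ∧ T2 ∩ Rect = ∅ := by
  have hxQ : (0:ℚ) < (xu:ℚ) - xl := by
    have : (xl:ℚ) < xu := by exact_mod_cast hx
    linarith
  have hyQ : (0:ℚ) < (yu:ℚ) - yl := by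
    have : (yl:ℚ) < yu := by exact_mod_cast hy
    linarith
  -- key: a point of P cannot satisfy both cx ≤ x and cy ≤ y
  have key : ∀ q : ℤ × ℤ, q ∈ P → cx ≤ q.1 → cy ≤ q.2 → False := by
    intro q hq h1 h2
    rw [hP] at hq
    obtain ⟨_, _, hlt⟩ := hq
    have hcx' : ((xl : ℚ) + xu) / 2 ≤ cx := hcx ▸ Int.le_ceil _
    have hcy' : ((yl : ℚ) + yu) / 2 ≤ cy := hcy ▸ Int.le_ceil _
    have hx1 : ((cx:ℚ)) ≤ (q.1:ℚ) := by exact_mod_cast h1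
    have hy1 : ((cy:ℚ)) ≤ (q.2:ℚ) := by exact_mod_cast h2
    have hA : (1:ℚ)/2 ≤ ((q.1 : ℚ) - xl) / ((xu : ℚ) - xl) := by
      rw [le_div_iff₀ hxQ]; linarith
    have hB : (1:ℚ)/2 ≤ ((q.2 : ℚ) - yl) / ((yu : ℚ) - yl) := by
      rw [le_div_iff₀ hyQ]; linarith
    linarith
  refine ⟨?_, ?_, ?_, ?_⟩
  · ext q
    simp only [hT1, hT2, hRect, Set.mem_union, Set.mem_setOf_eq, Set.sep_setOf,
      Set.mem_setOf_eq]
    constructor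
    · intro hq
      rcases le_or_gt cx q.1 with h | h
      · exact Or.inl (Or.inl ⟨hq, h⟩)
      rcases le_or_gt cy q.2 with h' | h'
      · exact Or.inl (Or.inr ⟨hq, h'⟩)
      · exact Or.inr ⟨hq, by omega, by omega⟩
    · rintro ((⟨h, _⟩ | ⟨h, _⟩) | ⟨h, _⟩) <;> exact h
  · ext q
    simp only [hT1, hT2, Set.mem_inter_iff, Set.mem_setOf_eq, Set.mem_empty_iff_false,
      iff_false]
    rintro ⟨⟨hq, h1⟩, -, h2⟩
    exact key q hq h1 h2
  · ext q
    simp only [hT1, hRect, Set.mem_inter_iff, Set.mem_setOf_eq, Set.mem_empty_iff_false,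
      iff_false]
    rintro ⟨⟨-, h1⟩, hr⟩
    obtain ⟨-, h2, -⟩ := hr
    omega
  · ext q
    simp only [hT2, hRect, Set.mem_inter_iff, Set.mem_setOf_eq, Set.mem_empty_iff_false,
      iff_false]
    rintro ⟨⟨-, h1⟩, hr⟩
    obtain ⟨-, -, h2⟩ := hr
    omega
end
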